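/- arXiv:2601.14174 — 2 statements merged into one kernel-verified Lean document; each statement's English description precedes it below -/
import Mathlib

section
/- Let A be a positive Hilbert-Schmidt operator and P_1,…,P_N orthogonal projections with pairwise orthogonal ranges summing to I. If ∑_{j=1}^N ‖A^{1/2} P_j A^{1/2}‖₂² = ‖A‖₂², then A commutes with every P_j (equivalently A = ∑_j P_j A P_j). -/
/-!
For `X = √A * Pⱼ` we have `X X* = √A Pⱼ √A` and `X* X = Pⱼ A Pⱼ`, and `X X*`, `X* X` always have
the same Hilbert–Schmidt norm. On the other hand `‖A‖₂² = ∑_{j,k} ‖P_k A P_j‖₂²`, so the hypothesis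
says that the off-diagonal blocks `P_k A P_j` (`k ≠ j`) have Hilbert–Schmidt norm zero, i.e. vanish.
-/

noncomputable section

variable {H : Type*} [NormedAddCommGroup H] [InnerProductSpace ℂ H] [CompleteSpace H]

open ContinuousLinearMap
open scoped ENNReal InnerProductSpace

section Compression

variable {R κ : Type*} [Semiring R] [Fintype κ] {P : κ → R}

theorem mul_proj_eq_compress_of_forall_ne (hsum : ∑ k, P k = 1) {T : R} {j : κ}
    (h : ∀ k, k ≠ j → P k * T * P j = 0) : T * P j = P j * T * P j := by
  calc T * P j = ∑ k, P k * T * P j := by rw [← Finset.sum_mul, ← Finset.sum_mul, hsum, one_mul]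
    _ = P j * T * P j := Finset.sum_eq_single_of_mem j (Finset.mem_univ j) fun k _ hk => h k hk

theorem proj_mul_eq_compress_of_forall_ne (hsum : ∑ k, P k = 1) {T : R} {j : κ}
    (h : ∀ k, k ≠ j → P j * T * P k = 0) : P j * T = P j * T * P j := by
  calc P j * T = ∑ k, P j * T * P k := by rw [← Finset.mul_sum, hsum, mul_one]
    _ = P j * T * P j := Finset.sum_eq_single_of_mem j (Finset.mem_univ j) fun k _ hk => h k hk

theorem eq_sum_compress_of_forall (hsum : ∑ k, P k = 1) {T : R}
    (h : ∀ j, T * P j = P j * T * P j) : T = ∑ j, P j * T * P j := by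
  calc T = ∑ j, T * P j := by rw [← Finset.mul_sum, hsum, mul_one]
    _ = ∑ j, P j * T * P j := Finset.sum_congr rfl fun j _ => h j

end Compression

theorem ENNReal.eq_zero_of_sum_sum_eq_sum_diag {κ : Type*} [Fintype κ] [DecidableEq κ]
    {f : κ → κ → ℝ≥0∞} (hfin : ∑ j, f j j ≠ ∞) (h : ∑ j, ∑ k, f j k = ∑ j, f j j)
    {j k : κ} (hkj : k ≠ j) : f j k = 0 := by
  have hsplit : ∑ j, ∑ k, f j k = ∑ j, f j j + ∑ j, ∑ k ∈ Finset.univ.erase j, f j k := by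
    rw [← Finset.sum_add_distrib]
    exact Finset.sum_congr rfl fun j _ => (Finset.add_sum_erase _ _ (Finset.mem_univ j)).symm
  have hoff : ∑ j, ∑ k ∈ Finset.univ.erase j, f j k = 0 := by
    rw [hsplit] at h
    exact (ENNReal.add_right_inj hfin).mp (h.trans (add_zero _).symm)
  simp only [Finset.sum_eq_zero_iff, Finset.mem_univ, Finset.mem_erase, true_implies,
    and_true] at hoff
  exact hoff j k hkj

section

variable {𝕜 E : Type*} [RCLike 𝕜] [NormedAddCommGroup E] [InnerProductSpace 𝕜 E] [CompleteSpace E]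

theorem ContinuousLinearMap.norm_apply_eq_of_star_mul_self_eq {X Y : E →L[𝕜] E}
    (h : star X * X = star Y * Y) (v : E) : ‖X v‖ = ‖Y v‖ := by
  have hsq : ‖X v‖ ^ 2 = ‖Y v‖ ^ 2 := by
    rw [apply_norm_sq_eq_inner_adjoint_left, apply_norm_sq_eq_inner_adjoint_left]
    simp only [← star_eq_adjoint, ← mul_def, h]
  exact (pow_left_inj₀ (norm_nonneg _) (norm_nonneg _) two_ne_zero).mp hsq

theorem ContinuousLinearMap.sum_norm_sq_apply_eq_norm_sq {κ : Type*} [Fintype κ]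
    {P : κ → E →L[𝕜] E} (hP : ∀ j, IsStarProjection (P j)) (hsum : ∑ j, P j = 1) (v : E) :
    ∑ j, ‖P j v‖ ^ 2 = ‖v‖ ^ 2 := by
  have hproj (j : κ) : ‖P j v‖ ^ 2 = RCLike.re ⟪P j v, v⟫_𝕜 := by
    rw [apply_norm_sq_eq_inner_adjoint_left, ← star_eq_adjoint, ← mul_def,
      (hP j).isSelfAdjoint.star_eq, (hP j).isIdempotentElem.eq]
  simp only [hproj, ← map_sum, ← sum_inner, ← sum_apply, hsum]
  rw [one_apply_eq_self, inner_self_eq_norm_sq]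

end

namespace HilbertBasis

section RCLike

variable {𝕜 E ι : Type*} [RCLike 𝕜] [NormedAddCommGroup E] [InnerProductSpace 𝕜 E]
  (b : HilbertBasis ι 𝕜 E)

theorem hasSum_norm_inner_sq (x : E) : HasSum (fun i => ‖⟪b i, x⟫_𝕜‖ ^ 2) (‖x‖ ^ 2) := by
  simpa [b.repr_apply_apply] using lp.hasSum_norm (p := 2) (by norm_num) (b.repr x)

theorem ext_continuousLinearMap {F : Type*} [TopologicalSpace F] [AddCommMonoid F] [Module 𝕜 F]
    [T2Space F] {T U : E →L[𝕜] F} (h : ∀ i, T (b i) = U (b i)) : T = U := by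
  refine ext_on (Submodule.dense_iff_topologicalClosure_eq_top.mpr b.dense_span) ?_
  rintro _ ⟨i, rfl⟩
  exact h i

/-- `∑ᵢ ‖T bᵢ‖²`, taken in `ℝ≥0∞` so that it is meaningful (possibly `∞`) for every bounded `T`. -/
def hsNormSq (T : E →L[𝕜] E) : ℝ≥0∞ := ∑' i, ENNReal.ofReal (‖T (b i)‖ ^ 2)

theorem ofReal_tsum_eq_hsNormSq {T : E →L[𝕜] E} (h : Summable fun i => ‖T (b i)‖ ^ 2) :
    ENNReal.ofReal (∑' i, ‖T (b i)‖ ^ 2) = b.hsNormSq T :=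
  ENNReal.ofReal_tsum_of_nonneg (fun _ => sq_nonneg _) h

theorem summable_of_hsNormSq_ne_top {T : E →L[𝕜] E} (h : b.hsNormSq T ≠ ∞) :
    Summable fun i => ‖T (b i)‖ ^ 2 :=
  (ENNReal.summable_toReal h).congr fun _ => ENNReal.toReal_ofReal (sq_nonneg _)

theorem hsNormSq_congr {T U : E →L[𝕜] E} (h : ∀ v, ‖T v‖ = ‖U v‖) :
    b.hsNormSq T = b.hsNormSq U := by
  simp only [hsNormSq, h]

theorem hsNormSq_eq_zero_iff {T : E →L[𝕜] E} : b.hsNormSq T = 0 ↔ T = 0 := by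
  refine ⟨fun h => b.ext_continuousLinearMap fun i => ?_, fun h => by simp [hsNormSq, h]⟩
  simpa using ENNReal.tsum_eq_zero.mp h i

theorem hsNormSq_eq_tsum_tsum (T : E →L[𝕜] E) :
    b.hsNormSq T = ∑' i, ∑' m, ENNReal.ofReal (‖⟪b m, T (b i)⟫_𝕜‖ ^ 2) := by
  refine tsum_congr fun i => ?_
  have hp := b.hasSum_norm_inner_sq (T (b i))
  rw [← hp.tsum_eq, ENNReal.ofReal_tsum_of_nonneg (fun _ => sq_nonneg _) hp.summable]

variable [CompleteSpace E]

theorem hsNormSq_star (T : E →L[𝕜] E) : b.hsNormSq (star T) = b.hsNormSq T := by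
  have hsymm (i m : ι) : ‖⟪b m, star T (b i)⟫_𝕜‖ = ‖⟪b i, T (b m)⟫_𝕜‖ := by
    rw [star_eq_adjoint, ← adjoint_inner_left, adjoint_adjoint, norm_inner_symm]
  rw [hsNormSq_eq_tsum_tsum, hsNormSq_eq_tsum_tsum, ENNReal.tsum_comm]
  simp only [hsymm]

section Projections

variable {κ : Type*} [Fintype κ] {P : κ → E →L[𝕜] E}

theorem hsNormSq_eq_sum_proj_mul (hP : ∀ j, IsStarProjection (P j)) (hsum : ∑ j, P j = 1)
    (T : E →L[𝕜] E) :
    b.hsNormSq T = ∑ j, b.hsNormSq (P j * T) := by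
  have hpyth (i : ι) :
      ENNReal.ofReal (‖T (b i)‖ ^ 2) = ∑ j, ENNReal.ofReal (‖(P j * T) (b i)‖ ^ 2) := by
    rw [← ENNReal.ofReal_sum_of_nonneg fun _ _ => sq_nonneg _]
    exact congrArg _ (sum_norm_sq_apply_eq_norm_sq hP hsum (T (b i))).symm
  rw [hsNormSq, tsum_congr hpyth, Summable.tsum_finsetSum fun _ _ => ENNReal.summable]
  rfl

theorem hsNormSq_eq_sum_sum_compress (hP : ∀ j, IsStarProjection (P j)) (hsum : ∑ j, P j = 1)
    (T : E →L[𝕜] E) :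
    b.hsNormSq T = ∑ j, ∑ k, b.hsNormSq (P k * T * P j) := by
  calc b.hsNormSq T = b.hsNormSq (star T) := (b.hsNormSq_star T).symm
    _ = ∑ j, b.hsNormSq (star (P j * star T)) := by
      rw [b.hsNormSq_eq_sum_proj_mul hP hsum]
      simp only [hsNormSq_star]
    _ = ∑ j, ∑ k, b.hsNormSq (P k * T * P j) := by
      simp only [star_mul, star_star, (hP _).isSelfAdjoint.star_eq, mul_assoc,
        b.hsNormSq_eq_sum_proj_mul hP hsum (T * P _)]

theorem hsNormSq_compress_le (hP : ∀ j, IsStarProjection (P j)) (hsum : ∑ j, P j = 1)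
    (T : E →L[𝕜] E) (j k : κ) :
    b.hsNormSq (P k * T * P j) ≤ b.hsNormSq T := by
  rw [b.hsNormSq_eq_sum_sum_compress hP hsum T]
  exact (Finset.single_le_sum (fun _ _ => zero_le) (Finset.mem_univ k)).trans
    (Finset.single_le_sum (f := fun j => ∑ k, b.hsNormSq (P k * T * P j))
      (fun _ _ => zero_le) (Finset.mem_univ j))

theorem compress_eq_zero_of_sum_hsNormSq_compress_eq [DecidableEq κ]
    (hP : ∀ j, IsStarProjection (P j)) (hsum : ∑ j, P j = 1) {T : E →L[𝕜] E}
    (hfin : b.hsNormSq T ≠ ∞) (h : ∑ j, b.hsNormSq (P j * T * P j) = b.hsNormSq T)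
    {j k : κ} (hkj : k ≠ j) : P k * T * P j = 0 :=
  b.hsNormSq_eq_zero_iff.mp <| ENNReal.eq_zero_of_sum_sum_eq_sum_diag
    (f := fun j k => b.hsNormSq (P k * T * P j)) (h.trans_ne hfin)
    ((b.hsNormSq_eq_sum_sum_compress hP hsum T).symm.trans h.symm) hkj

end Projections

end RCLike

variable {ι : Type*} (b : HilbertBasis ι ℂ H)

/-- With `R = √(X* X)`: `(X X*)* (X X*) = (R X*)* (R X*)` and `(X R)* (X R) = (X* X)* (X* X)`,
while `R X*` and `X R` are adjoint to each other. -/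
theorem hsNormSq_mul_star_self (X : H →L[ℂ] H) :
    b.hsNormSq (X * star X) = b.hsNormSq (star X * X) := by
  set R := CFC.sqrt (star X * X)
  have hR : IsSelfAdjoint R := (CFC.sqrt_nonneg _).isSelfAdjoint
  have hRR : R * R = star X * X := CFC.sqrt_mul_sqrt_self _ (star_mul_self_nonneg X)
  calc b.hsNormSq (X * star X) = b.hsNormSq (R * star X) := by
        refine b.hsNormSq_congr (norm_apply_eq_of_star_mul_self_eq ?_)
        simp only [star_mul, star_star, hR.star_eq]
        rw [show X * star X * (X * star X) = X * (star X * X) * star X by simp only [mul_assoc],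
          ← hRR]
        simp only [mul_assoc]
    _ = b.hsNormSq (X * R) := by rw [← b.hsNormSq_star, star_mul, star_star, hR.star_eq]
    _ = b.hsNormSq (star X * X) := by
        refine b.hsNormSq_congr (norm_apply_eq_of_star_mul_self_eq ?_)
        simp only [star_mul, star_star, hR.star_eq]
        rw [show R * star X * (X * R) = R * (star X * X) * R by simp only [mul_assoc], ← hRR]
        simp only [mul_assoc]

theorem hsNormSq_sqrt_mul_mul_sqrt {A P : H →L[ℂ] H} (hA : 0 ≤ A) (hP : IsStarProjection P) :
    b.hsNormSq (CFC.sqrt A * P * CFC.sqrt A) = b.hsNormSq (P * A * P) := by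
  have hS : star (CFC.sqrt A) = CFC.sqrt A := (CFC.sqrt_nonneg A).isSelfAdjoint.star_eq
  convert b.hsNormSq_mul_star_self (CFC.sqrt A * P) using 2
  · simp only [star_mul, hS, hP.isSelfAdjoint.star_eq, mul_assoc]
    rw [← mul_assoc P P, hP.isIdempotentElem.eq]
  · simp only [star_mul, hS, hP.isSelfAdjoint.star_eq, mul_assoc]
    rw [← mul_assoc (CFC.sqrt A) (CFC.sqrt A), CFC.sqrt_mul_sqrt_self A hA]

end HilbertBasis

theorem hs_equality_block_diagonal_general {ι : Type*} (b : HilbertBasis ι ℂ H)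
    {N : ℕ} (P : Fin N → H →L[ℂ] H)
    (hsa : ∀ j, IsSelfAdjoint (P j)) (hidem : ∀ j, IsIdempotentElem (P j))
    (hsum : ∑ j, P j = 1)
    (A : H →L[ℂ] H) (hA : 0 ≤ A)
    (hHS : Summable fun i => ‖A (b i)‖ ^ 2)
    (heq : ∑ j, ∑' i, ‖(CFC.sqrt A * P j * CFC.sqrt A) (b i)‖ ^ 2
      = ∑' i, ‖A (b i)‖ ^ 2) :
    (∀ j, A * P j = P j * A) ∧ A = ∑ j, P j * A * P j := by
  have hP (j : Fin N) : IsStarProjection (P j) := ⟨hidem j, hsa j⟩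
  have hcompress (j : Fin N) := b.hsNormSq_sqrt_mul_mul_sqrt hA (hP j)
  have hA_fin : b.hsNormSq A ≠ ∞ := b.ofReal_tsum_eq_hsNormSq hHS ▸ ENNReal.ofReal_ne_top
  have hsummable (j : Fin N) : Summable fun i => ‖(CFC.sqrt A * P j * CFC.sqrt A) (b i)‖ ^ 2 :=
    b.summable_of_hsNormSq_ne_top <| ne_top_of_le_ne_top hA_fin <|
      (hcompress j).trans_le (b.hsNormSq_compress_le hP hsum A j j)
  have hdiag : ∑ j, b.hsNormSq (P j * A * P j) = b.hsNormSq A := by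
    have h := congrArg ENNReal.ofReal heq
    rw [ENNReal.ofReal_sum_of_nonneg fun _ _ => tsum_nonneg fun _ => sq_nonneg _,
      b.ofReal_tsum_eq_hsNormSq hHS] at h
    simpa only [b.ofReal_tsum_eq_hsNormSq (hsummable _), hcompress] using h
  have hoff (j k : Fin N) (hkj : k ≠ j) : P k * A * P j = 0 :=
    b.compress_eq_zero_of_sum_hsNormSq_compress_eq hP hsum hA_fin hdiag hkj
  have hright (j : Fin N) : A * P j = P j * A * P j :=
    mul_proj_eq_compress_of_forall_ne hsum (hoff j)
  have hleft (j : Fin N) : P j * A = P j * A * P j :=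
    proj_mul_eq_compress_of_forall_ne hsum fun k hkj => hoff k j hkj.symm
  exact ⟨fun j => (hright j).trans (hleft j).symm, eq_sum_compress_of_forall hsum hright⟩

/-- equality in the upper HS bound forces block-diagonality. -/
theorem hs_equality_block_diagonal {ι : Type*} (b : HilbertBasis ι ℂ H)
    {N : ℕ} (P : Fin N → H →L[ℂ] H)
    (hsa : ∀ j, IsSelfAdjoint (P j)) (hidem : ∀ j, IsIdempotentElem (P j))
    (horth : ∀ j j', j ≠ j' → P j * P j' = 0)
    (hsum : ∑ j, P j = 1)
    (A : H →L[ℂ] H) (hA : 0 ≤ A)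
    (hHS : Summable fun i => ‖A (b i)‖ ^ 2)
    (heq : ∑ j, ∑' i, ‖(CFC.sqrt A * P j * CFC.sqrt A) (b i)‖ ^ 2
      = ∑' i, ‖A (b i)‖ ^ 2) :
    (∀ j, A * P j = P j * A) ∧ A = ∑ j, P j * A * P j :=
  hs_equality_block_diagonal_general b P hsa hidem hsum A hA hHS heq
end
end

section
/- In the HS-greedy setting above, if at some step R^{(k-1)} commutes with every P_j (i.e., is block-diagonal), then the one-step bound improves to ‖R^{(k)}‖₂² ≤ (1 − 1/N) ‖R^{(k-1)}‖₂². -/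
/-!
Because `A` commutes with each `P j`, so does `√A`, hence `√A P_j √A = P_j A`: the block norms
are `‖P_j A‖₂²`, and they add up to `‖A‖₂²` since the `P_j` are orthogonal projections summing
to `1`. The remainder is `(1 - P_{j₀}) A`, of squared norm `‖A‖₂² - ‖P_{j₀} A‖₂²`, and the
largest of `N` numbers summing to `‖A‖₂²` is at least their mean `‖A‖₂² / N`.
-/

set_option synthInstance.maxHeartbeats 1000000
set_option maxHeartbeats 1000000

noncomputable section

variable {H : Type*} [NormedAddCommGroup H] [InnerProductSpace ℂ H] [CompleteSpace H]

open scoped InnerProductSpace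

theorem CFC.sqrt_mul_mul_sqrt_of_commute {A : Type*} [CStarAlgebra A] [PartialOrder A]
    [StarOrderedRing A] {a q : A} (ha : 0 ≤ a) (h : Commute a q) :
    CFC.sqrt a * q * CFC.sqrt a = q * a := by
  have hsqrt : Commute (CFC.sqrt a) q := h.cfcₙ_nnreal NNReal.sqrt
  rw [hsqrt.eq, mul_assoc, CFC.sqrt_mul_sqrt_self a ha]

section StarProjection

variable {𝕜 E : Type*} [RCLike 𝕜] [NormedAddCommGroup E] [InnerProductSpace 𝕜 E] [CompleteSpace E]

theorem IsStarProjection.norm_apply_sq {p : E →L[𝕜] E} (hp : IsStarProjection p) (x : E) :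
    ‖p x‖ ^ 2 = RCLike.re ⟪x, p x⟫_𝕜 := by
  rw [← inner_self_eq_norm_sq (𝕜 := 𝕜), ← ContinuousLinearMap.adjoint_inner_right,
    hp.isSelfAdjoint.adjoint_eq, ← mul_apply_eq_comp, hp.isIdempotentElem.eq]

theorem IsStarProjection.norm_sub_apply_sq {p : E →L[𝕜] E} (hp : IsStarProjection p) (x : E) :
    ‖x - p x‖ ^ 2 = ‖x‖ ^ 2 - ‖p x‖ ^ 2 := by
  rw [norm_sub_sq (𝕜 := 𝕜), hp.norm_apply_sq]
  ring

theorem IsStarProjection.norm_apply_sq_le {p : E →L[𝕜] E} (hp : IsStarProjection p) (x : E) :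
    ‖p x‖ ^ 2 ≤ ‖x‖ ^ 2 := by
  have := hp.norm_sub_apply_sq x
  nlinarith [sq_nonneg ‖x - p x‖]

theorem sum_norm_apply_sq_of_sum_eq_one {ι : Type*} [Fintype ι] {P : ι → E →L[𝕜] E}
    (hP : ∀ j, IsStarProjection (P j)) (hsum : ∑ j, P j = 1) (x : E) :
    ∑ j, ‖P j x‖ ^ 2 = ‖x‖ ^ 2 := by
  simp_rw [(hP _).norm_apply_sq, ← map_sum, ← inner_sum, ← sum_apply, hsum,
    one_apply_eq_self, inner_self_eq_norm_sq]

variable {κ : Type*} {y : κ → E} (hy : Summable fun i => ‖y i‖ ^ 2)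
include hy

theorem IsStarProjection.summable_norm_apply_sq {p : E →L[𝕜] E} (hp : IsStarProjection p) :
    Summable fun i => ‖p (y i)‖ ^ 2 :=
  hy.of_nonneg_of_le (fun _ => sq_nonneg _) fun i => hp.norm_apply_sq_le (y i)

theorem IsStarProjection.tsum_norm_sub_apply_sq {p : E →L[𝕜] E} (hp : IsStarProjection p) :
    ∑' i, ‖y i - p (y i)‖ ^ 2 = ∑' i, ‖y i‖ ^ 2 - ∑' i, ‖p (y i)‖ ^ 2 := by
  simp_rw [hp.norm_sub_apply_sq]
  exact hy.tsum_sub (hp.summable_norm_apply_sq hy)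

theorem sum_tsum_norm_apply_sq_of_sum_eq_one {ι : Type*} [Fintype ι] {P : ι → E →L[𝕜] E}
    (hP : ∀ j, IsStarProjection (P j)) (hsum : ∑ j, P j = 1) :
    ∑ j, ∑' i, ‖P j (y i)‖ ^ 2 = ∑' i, ‖y i‖ ^ 2 := by
  rw [← Summable.tsum_finsetSum fun j _ => (hP j).summable_norm_apply_sq hy]
  simp_rw [sum_norm_apply_sq_of_sum_eq_one hP hsum]

end StarProjection

theorem Finset.sum_sub_le_one_sub_inv_card_mul_sum {ι : Type*} [Fintype ι] {t : ι → ℝ} {j₀ : ι}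
    (hmax : ∀ j, t j ≤ t j₀) :
    ∑ j, t j - t j₀ ≤ (1 - 1 / Fintype.card ι) * ∑ j, t j := by
  have hcard : (0 : ℝ) < Fintype.card ι := by exact_mod_cast Fintype.card_pos_iff.2 ⟨j₀⟩
  have hsum : ∑ j, t j ≤ t j₀ * Fintype.card ι := by
    simpa [mul_comm] using Finset.sum_le_card_nsmul Finset.univ t (t j₀) fun j _ => hmax j
  have hmean : (∑ j, t j) / Fintype.card ι ≤ t j₀ := (div_le_iff₀ hcard).2 hsum
  rw [sub_mul, one_mul, one_div_mul_eq_div]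
  linarith

theorem hs_greedy_block_diagonal_step_general {ι : Type*} (b : HilbertBasis ι ℂ H)
    {N : ℕ}
    (P : Fin N → H →L[ℂ] H)
    (hsa : ∀ j, IsSelfAdjoint (P j)) (hidem : ∀ j, IsIdempotentElem (P j))
    (hsum : ∑ j, P j = 1)
    (A : H →L[ℂ] H) (hA : 0 ≤ A)
    (hHS : Summable fun i => ‖A (b i)‖ ^ 2)
    (hcomm : ∀ j, A * P j = P j * A)
    (j₀ : Fin N)
    (hmax : ∀ j, ∑' i, ‖(CFC.sqrt A * P j * CFC.sqrt A) (b i)‖ ^ 2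
      ≤ ∑' i, ‖(CFC.sqrt A * P j₀ * CFC.sqrt A) (b i)‖ ^ 2) :
    ∑' i, ‖(A - CFC.sqrt A * P j₀ * CFC.sqrt A) (b i)‖ ^ 2
      ≤ (1 - 1 / (N : ℝ)) * ∑' i, ‖A (b i)‖ ^ 2 := by
  have hP : ∀ j, IsStarProjection (P j) := fun j => ⟨hidem j, hsa j⟩
  have hblock : ∀ j, CFC.sqrt A * P j * CFC.sqrt A = P j * A := fun j =>
    CFC.sqrt_mul_mul_sqrt_of_commute hA (hcomm j)
  simp only [hblock, sub_apply, mul_apply_eq_comp] at hmax ⊢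
  rw [(hP j₀).tsum_norm_sub_apply_sq hHS, ← sum_tsum_norm_apply_sq_of_sum_eq_one hHS hP hsum]
  simpa using Finset.sum_sub_le_one_sub_inv_card_mul_sum hmax

/-- improved one-step HS bound when the operator is block-diagonal. -/
theorem hs_greedy_block_diagonal_step {ι : Type*} (b : HilbertBasis ι ℂ H)
    {N : ℕ} (hN : 0 < N)
    (P : Fin N → H →L[ℂ] H)
    (hsa : ∀ j, IsSelfAdjoint (P j)) (hidem : ∀ j, IsIdempotentElem (P j))
    (horth : ∀ j j', j ≠ j' → P j * P j' = 0)
    (hsum : ∑ j, P j = 1)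
    (A : H →L[ℂ] H) (hA : 0 ≤ A)
    (hHS : Summable fun i => ‖A (b i)‖ ^ 2)
    (hcomm : ∀ j, A * P j = P j * A)
    (j₀ : Fin N)
    (hmax : ∀ j, ∑' i, ‖(CFC.sqrt A * P j * CFC.sqrt A) (b i)‖ ^ 2
      ≤ ∑' i, ‖(CFC.sqrt A * P j₀ * CFC.sqrt A) (b i)‖ ^ 2) :
    ∑' i, ‖(A - CFC.sqrt A * P j₀ * CFC.sqrt A) (b i)‖ ^ 2
      ≤ (1 - 1 / (N : ℝ)) * ∑' i, ‖A (b i)‖ ^ 2 :=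
  hs_greedy_block_diagonal_step_general b P hsa hidem hsum A hA hHS hcomm j₀ hmax
end
end
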